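/- arXiv:2008.05391 — 8 statements merged into one kernel-verified Lean document; each statement's English description precedes it below -/
import Mathlib

section
/- There exists a unique real number α ∈ (0,1) satisfying (1−α)·ln(1−α) + (2 − 1/e)·(1 − 2α) = 0, and this root satisfies α > 0.405. -/
/-! For `c ≥ 0` the function `φ_c(α) = (1 - α) log (1 - α) + c (1 - 2α)` is strictly decreasing on
`[0, 1/2]`, because its derivative `-log (1 - α) - 1 - 2c` is at most `log 2 - 1 < 0` there, and it is
negative on `[1/2, 1)`, where both summands are `≤ 0` and the first is `< 0`. For `c > 0` it starts at
`φ_c(0) = c > 0`, so it has exactly one root in `(0, 1)`. For `c = 2 - 1/e ≈ 1.6321` one checks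
numerically that `φ_c(0.405) > 0`, which puts the root to the right of `0.405`. -/

open Real Set

noncomputable def phi (c α : ℝ) : ℝ := (1 - α) * log (1 - α) + c * (1 - 2 * α)

lemma phi_hasDerivAt (c : ℝ) {x : ℝ} (hx : x < 1) :
    HasDerivAt (phi c) (-log (1 - x) - 1 - 2 * c) x := by
  have hx' : 1 - x ≠ 0 := by linarith
  have h₁ : HasDerivAt (fun α : ℝ => 1 - α) (-1) x := by
    simpa using (hasDerivAt_id x).const_sub 1
  have h₂ : HasDerivAt (fun α : ℝ => 1 - 2 * α) (-2) x := by
    simpa using ((hasDerivAt_id x).const_mul 2).const_sub 1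
  refine ((h₁.mul (h₁.log hx')).add (h₂.const_mul c)).congr_deriv ?_
  field_simp
  ring

lemma phi_continuousOn (c : ℝ) : ContinuousOn (phi c) (Icc 0 (1 / 2)) := fun _ hx =>
  (phi_hasDerivAt c (by linarith [hx.2])).continuousAt.continuousWithinAt

lemma phi_strictAntiOn {c : ℝ} (hc : 0 ≤ c) : StrictAntiOn (phi c) (Icc 0 (1 / 2)) := by
  refine strictAntiOn_of_deriv_neg (convex_Icc _ _) (phi_continuousOn c) fun x hx => ?_
  rw [interior_Icc] at hx
  rw [(phi_hasDerivAt c (by linarith [hx.2])).deriv]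
  have hlog : -log 2 < log (1 - x) := by
    rw [← log_inv]
    exact log_lt_log (by norm_num) (by linarith [hx.2])
  linarith [log_two_lt_d9]

lemma phi_neg_of_half_le {c α : ℝ} (hc : 0 ≤ c) (h₁ : 1 / 2 ≤ α) (h₂ : α < 1) : phi c α < 0 := by
  have hlog : (1 - α) * log (1 - α) < 0 :=
    mul_neg_of_pos_of_neg (by linarith) (log_neg (by linarith) (by linarith))
  have hlin : c * (1 - 2 * α) ≤ 0 := mul_nonpos_of_nonneg_of_nonpos hc (by linarith)
  exact add_neg_of_neg_of_nonpos hlog hlin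

lemma mem_Icc_of_phi_eq_zero {c α : ℝ} (hc : 0 ≤ c) (hα : α ∈ Ioo 0 1) (h : phi c α = 0) :
    α ∈ Icc 0 (1 / 2) := by
  refine ⟨hα.1.le, le_of_not_ge fun hle => ?_⟩
  exact (phi_neg_of_half_le hc hle hα.2).ne h

lemma existsUnique_phi_eq_zero {c : ℝ} (hc : 0 < c) :
    ∃! α : ℝ, α ∈ Ioo 0 1 ∧ phi c α = 0 := by
  have hzero : phi c 0 = c := by simp [phi]
  have hhalf : phi c (1 / 2) < 0 := phi_neg_of_half_le hc.le le_rfl (by norm_num)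
  obtain ⟨α, hα, hroot⟩ : (0 : ℝ) ∈ phi c '' Ioo 0 (1 / 2) :=
    intermediate_value_Ioo' (by norm_num) (phi_continuousOn c) ⟨hhalf, by rwa [hzero]⟩
  refine ⟨α, ⟨⟨hα.1, by linarith [hα.2]⟩, hroot⟩, fun β ⟨hβ, hβroot⟩ => ?_⟩
  exact (phi_strictAntiOn hc.le).injOn (mem_Icc_of_phi_eq_zero hc.le hβ hβroot)
    (Ioo_subset_Icc_self hα) (hβroot.trans hroot.symm)

lemma lt_of_phi_eq_zero {c α β : ℝ} (hc : 0 ≤ c) (hβ : β ∈ Icc 0 (1 / 2)) (hβpos : 0 < phi c β)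
    (hα : α ∈ Ioo 0 1) (h : phi c α = 0) : β < α := by
  refine lt_of_not_ge fun hle => ?_
  have := (phi_strictAntiOn hc).antitoneOn (mem_Icc_of_phi_eq_zero hc hα h) hβ hle
  linarith

lemma two_sub_inv_exp_one_gt : (1.632 : ℝ) < 2 - 1 / exp 1 := by
  have : 1 / exp 1 < 0.368 := by
    rw [div_lt_iff₀ (exp_pos 1)]
    linarith [exp_one_gt_d9]
  linarith

lemma log_0595_gt : (-0.5207 : ℝ) < log 0.595 := by
  rw [lt_log_iff_exp_lt (by norm_num), exp_neg, inv_lt_comm₀ (exp_pos _) (by norm_num)]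
  -- the Taylor polynomial of degree 4 already gives `exp 0.5207 ≥ 1.6828 > 1 / 0.595`
  have h := sum_le_exp_of_nonneg (by norm_num : (0 : ℝ) ≤ 0.5207) 5
  norm_num [Finset.sum_range_succ, Nat.factorial] at h
  linarith

lemma phi_two_sub_inv_exp_one_pos : 0 < phi (2 - 1 / exp 1) 0.405 := by
  have hc := two_sub_inv_exp_one_gt
  have hlog := log_0595_gt
  norm_num only [phi]
  nlinarith

/-- There exists a unique real number α ∈ (0,1) satisfying
(1−α)·ln(1−α) + (2 − 1/e)·(1 − 2α) = 0, and this root satisfies α > 0.405. -/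
theorem stmt0 :
    (∃! α : ℝ, α ∈ Set.Ioo (0 : ℝ) 1 ∧
      (1 - α) * Real.log (1 - α) + (2 - 1 / Real.exp 1) * (1 - 2 * α) = 0) ∧
    (∀ α : ℝ, α ∈ Set.Ioo (0 : ℝ) 1 →
      (1 - α) * Real.log (1 - α) + (2 - 1 / Real.exp 1) * (1 - 2 * α) = 0 →
      0.405 < α) := by
  have hc : 0 < 2 - 1 / exp 1 := by linarith [two_sub_inv_exp_one_gt]
  refine ⟨existsUnique_phi_eq_zero hc, fun α hα h => ?_⟩
  exact lt_of_phi_eq_zero hc.le (by norm_num) phi_two_sub_inv_exp_one_pos hα h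
end

section
/- Let u_1, …, u_s be distinct elements of V with prefix sets S_i := {u_1, …, u_i} (S_0 = ∅), and let T ⊆ V be a finset with c(T) > 0 such that for every 0 ≤ i < s and every v ∈ T \ S_i one has f(u_{i+1} ∣ S_i) · c v ≥ f(v ∣ S_i) · c (u_{i+1}). Then f(S_s) ≥ (1 − exp(−c(S_s)/c(T))) · f(T). -/
/-!
Let `g i := f T - f (S i)` be the gap left after `i` greedy picks. Submodularity and monotonicity
bound the gap by the sum of the marginal gains of the missing elements of `T`; the greedy rule
bounds each of those by `c v / c (u i)` times the gain of `u i`, whence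
`g (i + 1) ≤ (1 - c (u i) / c(T)) * g i ≤ exp (-c (u i) / c(T)) * g i`.
Multiplying these out from `g 0 = f T` gives the bound.
-/

open Finset Real

section Submodular

variable {V : Type*} [DecidableEq V] (f : Finset V → ℝ)

def marginalGain (v : V) (A : Finset V) : ℝ := f (insert v A) - f A

variable {f}

theorem marginalGain_le_of_subset (hsub : ∀ S T : Finset V, f (S ∪ T) + f (S ∩ T) ≤ f S + f T)
    {A B : Finset V} {v : V} (hAB : A ⊆ B) (hv : v ∉ B) :
    marginalGain f v B ≤ marginalGain f v A := by
  have hunion : insert v A ∪ B = insert v B := by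
    rw [insert_union, union_eq_right.mpr hAB]
  have hinter : insert v A ∩ B = A := by
    rw [insert_inter_of_notMem hv, inter_eq_left.mpr hAB]
  have := hsub (insert v A) B
  rw [hunion, hinter] at this
  unfold marginalGain
  linarith

theorem le_add_sum_marginalGain (hsub : ∀ S T : Finset V, f (S ∪ T) + f (S ∩ T) ≤ f S + f T)
    (A B : Finset V) : f (A ∪ B) ≤ f A + ∑ v ∈ B \ A, marginalGain f v A := by
  induction B using Finset.induction_on with
  | empty => simp
  | @insert b B hbB ih =>
    by_cases hbA : b ∈ A
    · rwa [union_insert, insert_eq_of_mem (mem_union_left B hbA), insert_sdiff_of_mem B hbA]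
    · have hb : b ∉ A ∪ B := by simp [hbA, hbB]
      have hdiminish : f (insert b (A ∪ B)) - f (A ∪ B) ≤ marginalGain f b A :=
        marginalGain_le_of_subset hsub subset_union_left hb
      rw [union_insert, insert_sdiff_of_notMem B hbA,
        sum_insert fun h => hbB (mem_sdiff.mp h).1]
      linarith

theorem sub_le_sum_marginalGain (hmono : ∀ S T : Finset V, S ⊆ T → f S ≤ f T)
    (hsub : ∀ S T : Finset V, f (S ∪ T) + f (S ∩ T) ≤ f S + f T) (A B : Finset V) :
    f B - f A ≤ ∑ v ∈ B \ A, marginalGain f v A := by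
  linarith [le_add_sum_marginalGain hsub A B, hmono B (A ∪ B) subset_union_right]

theorem sub_mul_le_marginalGain_mul_sum (hmono : ∀ S T : Finset V, S ⊆ T → f S ≤ f T)
    (hsub : ∀ S T : Finset V, f (S ∪ T) + f (S ∩ T) ≤ f S + f T) {c : V → ℝ}
    (hc : ∀ v, 0 ≤ c v) {A T : Finset V} {u : V}
    (hrule : ∀ v ∈ T \ A, marginalGain f v A * c u ≤ marginalGain f u A * c v) :
    (f T - f A) * c u ≤ marginalGain f u A * ∑ v ∈ T, c v := by
  have hgain : 0 ≤ marginalGain f u A := sub_nonneg.mpr (hmono _ _ (subset_insert u A))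
  calc (f T - f A) * c u
      ≤ (∑ v ∈ T \ A, marginalGain f v A) * c u :=
        mul_le_mul_of_nonneg_right (sub_le_sum_marginalGain hmono hsub A T) (hc u)
    _ ≤ marginalGain f u A * ∑ v ∈ T \ A, c v := by
        rw [sum_mul, mul_sum]
        exact sum_le_sum hrule
    _ ≤ marginalGain f u A * ∑ v ∈ T, c v :=
        mul_le_mul_of_nonneg_left
          (sum_le_sum_of_subset_of_nonneg sdiff_subset fun v _ _ => hc v) hgain

end Submodular

theorem le_exp_neg_sum_mul_of_decay {g a : ℕ → ℝ} {n : ℕ} (h0 : 0 ≤ g 0)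
    (hanti : ∀ i < n, g (i + 1) ≤ g i) (hdecay : ∀ i < n, g i * a i ≤ g i - g (i + 1)) :
    g n ≤ exp (-∑ i ∈ range n, a i) * g 0 := by
  induction n with
  | zero => simp
  | succ n ih =>
    have ih := ih (fun i hi => hanti i (hi.trans n.lt_succ_self))
      (fun i hi => hdecay i (hi.trans n.lt_succ_self))
    have hsplit : exp (-∑ i ∈ range (n + 1), a i) = exp (-∑ i ∈ range n, a i) * exp (-a n) := by
      rw [sum_range_succ, neg_add, exp_add]
    rw [hsplit]
    rcases lt_or_ge (g n) 0 with hneg | hnonneg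
    · have := hanti n n.lt_succ_self
      have : 0 ≤ exp (-∑ i ∈ range n, a i) * exp (-a n) * g 0 := by positivity
      linarith
    · calc g (n + 1) ≤ g n * (1 - a n) := by linarith [hdecay n n.lt_succ_self]
        _ ≤ g n * exp (-a n) := by
          gcongr
          linarith [add_one_le_exp (-a n)]
        _ ≤ exp (-∑ i ∈ range n, a i) * g 0 * exp (-a n) := by gcongr
        _ = exp (-∑ i ∈ range n, a i) * exp (-a n) * g 0 := by ring

theorem stmt2_general {V : Type*} [DecidableEq V]
    (f : Finset V → ℝ) (c : V → ℝ)
    (hf0 : f ∅ = 0)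
    (hmono : ∀ S T : Finset V, S ⊆ T → f S ≤ f T)
    (hsub : ∀ S T : Finset V, f (S ∪ T) + f (S ∩ T) ≤ f S + f T)
    (hcpos : ∀ v : V, 0 < c v)
    (s : ℕ) (u : ℕ → V)
    (hinj : ∀ i j : ℕ, i < s → j < s → u i = u j → i = j)
    (S : ℕ → Finset V) (hS : ∀ i : ℕ, S i = (Finset.range i).image u)
    (T : Finset V) (hT : 0 < ∑ v ∈ T, c v)
    (hrule : ∀ i : ℕ, i < s → ∀ v ∈ T \ S i,
      (f (insert (u i) (S i)) - f (S i)) * c v ≥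
      (f (insert v (S i)) - f (S i)) * c (u i)) :
    f (S s) ≥ (1 - Real.exp (-(∑ v ∈ S s, c v) / (∑ v ∈ T, c v))) * f T := by
  set C := ∑ v ∈ T, c v
  have hc : ∀ v, 0 ≤ c v := fun v => (hcpos v).le
  have hSsucc : ∀ i, S (i + 1) = insert (u i) (S i) := by
    intro i; rw [hS, hS, range_add_one, image_insert]
  have hdecay : ∀ i < s,
      (f T - f (S i)) * (c (u i) / C) ≤ (f T - f (S i)) - (f T - f (S (i + 1))) := by
    intro i hi
    have hstep := sub_mul_le_marginalGain_mul_sum hmono hsub hc (hrule i hi)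
    rw [mul_div_assoc', div_le_iff₀ hT, hSsucc]
    unfold marginalGain at hstep
    linarith
  have hanti : ∀ i < s, f T - f (S (i + 1)) ≤ f T - f (S i) := fun i _ =>
    sub_le_sub_left (hmono _ _ (hSsucc i ▸ subset_insert _ _)) _
  have hfT : 0 ≤ f T - f (S 0) := by
    rw [hS, range_zero, image_empty, hf0, sub_zero, ← hf0]
    exact hmono _ _ (empty_subset T)
  have hgap := le_exp_neg_sum_mul_of_decay hfT hanti hdecay
  have hcost : ∑ v ∈ S s, c v = ∑ i ∈ range s, c (u i) := by
    rw [hS, sum_image fun i hi j hj => hinj i j (mem_range.mp hi) (mem_range.mp hj)]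
  rw [← sum_div, ← hcost, hS 0, range_zero, image_empty, hf0, sub_zero] at hgap
  rw [neg_div]
  linarith

/-- Lemma 3.1: if u_1,…,u_s are distinct with prefix sets S_i and the greedy rule
holds against every element of T not yet picked, then
f(S_s) ≥ (1 − exp(−c(S_s)/c(T))) · f(T). -/
theorem stmt2 {V : Type*} [Fintype V] [DecidableEq V]
    (f : Finset V → ℝ) (c : V → ℝ)
    (hf0 : f ∅ = 0)
    (hmono : ∀ S T : Finset V, S ⊆ T → f S ≤ f T)
    (hsub : ∀ S T : Finset V, f (S ∪ T) + f (S ∩ T) ≤ f S + f T)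
    (hcpos : ∀ v : V, 0 < c v)
    (s : ℕ) (u : ℕ → V)
    (hinj : ∀ i j : ℕ, i < s → j < s → u i = u j → i = j)
    (S : ℕ → Finset V) (hS : ∀ i : ℕ, S i = (Finset.range i).image u)
    (T : Finset V) (hT : 0 < ∑ v ∈ T, c v)
    (hrule : ∀ i : ℕ, i < s → ∀ v ∈ T \ S i,
      (f (insert (u i) (S i)) - f (S i)) * c v ≥
      (f (insert v (S i)) - f (S i)) * c (u i)) :
    f (S s) ≥ (1 - Real.exp (-(∑ v ∈ S s, c v) / (∑ v ∈ T, c v))) * f T :=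
  stmt2_general f c hf0 hmono hsub hcpos s u hinj S hS T hT hrule
end

section
/- Let u_1, …, u_s be distinct elements of V with prefix sets S_i := {u_1, …, u_i} (S_0 = ∅), let b > 0, and let T ⊆ V be a finset with 0 < c(T) ≤ b such that for every 0 ≤ i < s and every v ∈ T \ S_i one has f(u_{i+1} ∣ S_i) · c v ≥ f(v ∣ S_i) · c (u_{i+1}). Then for every finset S' with S_s ⊆ S', it holds that f(S') ≥ (1 − exp(−c(S_s)/b)) · f(T). -/
/-!
Write `g A := f T - f A` for the gap to the benchmark set `T`. By submodularity and monotonicity,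
`g A` is at most the sum of the marginal gains `f(v ∣ A)` over `v ∈ T \ A`, and the greedy rule
bounds each of these by `f(u ∣ A) · c v / c u`; since `c(T) ≤ b` this gives
`c u · g A ≤ b · f(u ∣ A)`. Hence each greedy step shrinks the gap by a factor
`1 - c u / b ≤ exp (-c u / b)`, and after `s` steps `g (S s) ≤ exp (-c(S s) / b) · f T`.
-/

open Finset

section Submodular

variable {V : Type*} [DecidableEq V] {f : Finset V → ℝ}

theorem sub_le_sum_marginal (hsub : ∀ S T : Finset V, f (S ∪ T) + f (S ∩ T) ≤ f S + f T)
    (A D : Finset V) : f (A ∪ D) - f A ≤ ∑ v ∈ D, (f (insert v A) - f A) := by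
  induction D using Finset.induction_on with
  | empty => simp
  | @insert w D hw ih =>
    have hunion : insert w A ∪ (A ∪ D) = A ∪ insert w D := by grind
    have hinter : insert w A ∩ (A ∪ D) = A := by grind
    have := hsub (insert w A) (A ∪ D)
    rw [hunion, hinter] at this
    rw [sum_insert hw]
    linarith

theorem sub_le_sum_marginal_sdiff (hmono : ∀ S T : Finset V, S ⊆ T → f S ≤ f T)
    (hsub : ∀ S T : Finset V, f (S ∪ T) + f (S ∩ T) ≤ f S + f T) (A T : Finset V) :
    f T - f A ≤ ∑ v ∈ T \ A, (f (insert v A) - f A) := by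
  have := hmono T (A ∪ T \ A) (by simp)
  linarith [sub_le_sum_marginal hsub A (T \ A)]

variable {c : V → ℝ} {b : ℝ} {A T : Finset V} {u : V}

theorem mul_sub_le_mul_marginal_of_greedy (hmono : ∀ S T : Finset V, S ⊆ T → f S ≤ f T)
    (hsub : ∀ S T : Finset V, f (S ∪ T) + f (S ∩ T) ≤ f S + f T)
    (hc : ∀ v, 0 ≤ c v) (hTb : ∑ v ∈ T, c v ≤ b)
    (hgreedy : ∀ v ∈ T \ A, (f (insert v A) - f A) * c u ≤ (f (insert u A) - f A) * c v) :
    c u * (f T - f A) ≤ b * (f (insert u A) - f A) := by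
  have hgain : 0 ≤ f (insert u A) - f A := sub_nonneg.2 (hmono _ _ (subset_insert u A))
  have hcost : ∑ v ∈ T \ A, c v ≤ b :=
    (sum_le_sum_of_subset_of_nonneg sdiff_subset fun v _ _ ↦ hc v).trans hTb
  calc c u * (f T - f A)
      ≤ c u * ∑ v ∈ T \ A, (f (insert v A) - f A) := by
        gcongr
        · exact hc u
        · exact sub_le_sum_marginal_sdiff hmono hsub A T
    _ = ∑ v ∈ T \ A, (f (insert v A) - f A) * c u := by rw [mul_sum]; simp only [mul_comm]
    _ ≤ ∑ v ∈ T \ A, (f (insert u A) - f A) * c v := sum_le_sum hgreedy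
    _ = (f (insert u A) - f A) * ∑ v ∈ T \ A, c v := by rw [mul_sum]
    _ ≤ (f (insert u A) - f A) * b := mul_le_mul_of_nonneg_left hcost hgain
    _ = b * (f (insert u A) - f A) := mul_comm _ _

theorem sub_insert_le_exp_mul (hmono : ∀ S T : Finset V, S ⊆ T → f S ≤ f T)
    (hsub : ∀ S T : Finset V, f (S ∪ T) + f (S ∩ T) ≤ f S + f T)
    (hc : ∀ v, 0 ≤ c v) (hb : 0 < b) (hTb : ∑ v ∈ T, c v ≤ b)
    (hgreedy : ∀ v ∈ T \ A, (f (insert v A) - f A) * c u ≤ (f (insert u A) - f A) * c v)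
    (hgap : 0 ≤ f T - f A) :
    f T - f (insert u A) ≤ Real.exp (-(c u / b)) * (f T - f A) := by
  have hstep := mul_sub_le_mul_marginal_of_greedy hmono hsub hc hTb hgreedy
  have hgain : c u / b * (f T - f A) ≤ f (insert u A) - f A := by
    rw [div_mul_eq_mul_div, div_le_iff₀ hb]
    linarith
  calc f T - f (insert u A) ≤ (1 - c u / b) * (f T - f A) := by linarith
    _ ≤ Real.exp (-(c u / b)) * (f T - f A) :=
      mul_le_mul_of_nonneg_right (Real.one_sub_le_exp_neg _) hgap

theorem sub_image_range_le_exp_mul (hf0 : f ∅ = 0) (hmono : ∀ S T : Finset V, S ⊆ T → f S ≤ f T)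
    (hsub : ∀ S T : Finset V, f (S ∪ T) + f (S ∩ T) ≤ f S + f T)
    (hc : ∀ v, 0 ≤ c v) (hb : 0 < b) (hTb : ∑ v ∈ T, c v ≤ b) {s : ℕ} {u : ℕ → V}
    (hinj : Set.InjOn u (Set.Iio s))
    (hgreedy : ∀ i < s, ∀ v ∈ T \ (range i).image u,
      (f (insert v ((range i).image u)) - f ((range i).image u)) * c (u i) ≤
        (f (insert (u i) ((range i).image u)) - f ((range i).image u)) * c v) :
    ∀ i ≤ s, f T - f ((range i).image u) ≤
      Real.exp (-(∑ v ∈ (range i).image u, c v) / b) * f T := by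
  have hfT : 0 ≤ f T := hf0 ▸ hmono ∅ T (empty_subset T)
  intro i
  induction i with
  | zero => simp [hf0]
  | succ i ih =>
    intro (hi : i < s)
    set P := (range i).image u
    have hnew : u i ∉ P := by
      simp only [P, mem_image, mem_range, not_exists, not_and]
      exact fun j hj hji ↦ hj.ne (hinj (hj.trans hi) hi hji)
    have hprefix : (range (i + 1)).image u = insert (u i) P := by
      rw [range_add_one, image_insert]
    rw [hprefix, sum_insert hnew]
    have hgain : f P ≤ f (insert (u i) P) := hmono _ _ (subset_insert _ _)
    rcases le_or_gt (f T - f P) 0 with hclosed | hopen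
    · linarith [mul_nonneg (Real.exp_pos (-(c (u i) + ∑ v ∈ P, c v) / b)).le hfT]
    · calc f T - f (insert (u i) P) ≤ Real.exp (-(c (u i) / b)) * (f T - f P) :=
            sub_insert_le_exp_mul hmono hsub hc hb hTb (hgreedy i hi) hopen.le
        _ ≤ Real.exp (-(c (u i) / b)) * (Real.exp (-(∑ v ∈ P, c v) / b) * f T) := by
            gcongr
            exact ih hi.le
        _ = Real.exp (-(c (u i) + ∑ v ∈ P, c v) / b) * f T := by
            rw [← mul_assoc, ← Real.exp_add]
            ring_nf

end Submodular

theorem stmt3_general {V : Type*} [DecidableEq V]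
    (f : Finset V → ℝ) (c : V → ℝ) (b : ℝ)
    (hf0 : f ∅ = 0)
    (hmono : ∀ S T : Finset V, S ⊆ T → f S ≤ f T)
    (hsub : ∀ S T : Finset V, f (S ∪ T) + f (S ∩ T) ≤ f S + f T)
    (hcpos : ∀ v : V, 0 < c v)
    (hb : 0 < b)
    (s : ℕ) (u : ℕ → V)
    (hinj : ∀ i j : ℕ, i < s → j < s → u i = u j → i = j)
    (S : ℕ → Finset V) (hS : ∀ i : ℕ, S i = (Finset.range i).image u)
    (T : Finset V) (hTb : ∑ v ∈ T, c v ≤ b)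
    (hrule : ∀ i : ℕ, i < s → ∀ v ∈ T \ S i,
      (f (insert (u i) (S i)) - f (S i)) * c v ≥
      (f (insert v (S i)) - f (S i)) * c (u i)) :
    ∀ S' : Finset V, S s ⊆ S' →
      f S' ≥ (1 - Real.exp (-(∑ v ∈ S s, c v) / b)) * f T := by
  intro S' hS'
  obtain rfl : S = fun i ↦ (range i).image u := funext hS
  have hgap := sub_image_range_le_exp_mul hf0 hmono hsub (fun v ↦ (hcpos v).le) hb hTb
    (fun i hi j hj ↦ hinj i j hi hj) hrule s le_rfl
  linarith [hmono _ _ hS']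

/-- Corollary 3.2 style statement: under the greedy rule against T (with 0 < c(T) ≤ b),
every superset S' of S_s satisfies f(S') ≥ (1 − exp(−c(S_s)/b)) · f(T). -/
theorem stmt3 {V : Type*} [Fintype V] [DecidableEq V]
    (f : Finset V → ℝ) (c : V → ℝ) (b : ℝ)
    (hf0 : f ∅ = 0)
    (hmono : ∀ S T : Finset V, S ⊆ T → f S ≤ f T)
    (hsub : ∀ S T : Finset V, f (S ∪ T) + f (S ∩ T) ≤ f S + f T)
    (hcpos : ∀ v : V, 0 < c v)
    (hb : 0 < b)
    (s : ℕ) (u : ℕ → V)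
    (hinj : ∀ i j : ℕ, i < s → j < s → u i = u j → i = j)
    (S : ℕ → Finset V) (hS : ∀ i : ℕ, S i = (Finset.range i).image u)
    (T : Finset V) (hTpos : 0 < ∑ v ∈ T, c v) (hTb : ∑ v ∈ T, c v ≤ b)
    (hrule : ∀ i : ℕ, i < s → ∀ v ∈ T \ S i,
      (f (insert (u i) (S i)) - f (S i)) * c v ≥
      (f (insert v (S i)) - f (S i)) * c (u i)) :
    ∀ S' : Finset V, S s ⊆ S' →
      f S' ≥ (1 - Real.exp (-(∑ v ∈ S s, c v) / b)) * f T :=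
  stmt3_general f c b hf0 hmono hsub hcpos hb s u hinj S hS T hTb hrule
end

section
/- Let u_1, …, u_q be distinct elements of V with prefix sets S_i := {u_1, …, u_i} (S_0 = ∅), let p ≤ q and put Q := S_p and Q' := S_q. Let OPT ⊆ V be a finset, let o, o' ∈ OPT, and put OPT' := OPT \ (Q ∪ {o}). Assume: (i) for every p ≤ i < q and every v ∈ OPT' \ S_i, f(u_{i+1} ∣ S_i) · c v ≥ f(v ∣ S_i) · c (u_{i+1}); (ii) c(OPT') + c(o) ≤ b; (iii) c(Q) + c(o) > b; (iv) c(Q') + c(o') > b; (v) c(Q) > 0. Then f(Q') ≥ f(Q) + (1 − exp((c(Q) + c(o') − b)/c(Q))) · (f(Q ∪ OPT') − f(Q)). -/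
/-!
Let `A = Q ∪ OPT'` and `C = c(OPT')`. At every greedy step `i ≥ p`, submodularity and the greedy
ratio rule give `(f A - f S_i) · c(u_{i+1}) ≤ f(u_{i+1} ∣ S_i) · C`, i.e. the gap `f A - f S_i`
shrinks by a factor `1 - c(u_{i+1}) / C ≤ exp (-c(u_{i+1}) / C)`. Hence
`f A - f Q' ≤ exp (-(c(Q') - c(Q)) / C) · (f A - f Q)`, and the budget assumptions give
`C < c(Q)` and `c(Q') - c(Q) > b - c(o') - c(Q)`, which bound the exponent.
-/

open Finset

section SetFunction

variable {V : Type*} [DecidableEq V] (f : Finset V → ℝ)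

lemma sub_le_sum_marginal_of_submodular
    (hsub : ∀ S T : Finset V, f (S ∪ T) + f (S ∩ T) ≤ f S + f T) (A T : Finset V) :
    f (A ∪ T) - f A ≤ ∑ v ∈ T \ A, (f (insert v A) - f A) := by
  induction T using Finset.induction with
  | empty => simp
  | @insert a T haT ih =>
    by_cases haA : a ∈ A
    · rwa [union_insert, insert_eq_self.2 (mem_union_left _ haA), insert_sdiff_of_mem _ haA]
    · have hunion : insert a A ∪ (A ∪ T) = A ∪ insert a T := by
        ext x; simp only [mem_union, mem_insert]; tauto
      have hinter : insert a A ∩ (A ∪ T) = A := by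
        ext x; simp only [mem_inter, mem_union, mem_insert]
        constructor
        · rintro ⟨rfl | hx, hx' | hx'⟩ <;> first | assumption | exact absurd hx' haT
        · exact fun hx => ⟨Or.inr hx, Or.inl hx⟩
      have h := hsub (insert a A) (A ∪ T)
      rw [hunion, hinter] at h
      rw [insert_sdiff_of_notMem _ haA, sum_insert fun h => haT (mem_sdiff.1 h).1]
      linarith

lemma sub_mul_le_marginal_mul_sum
    (hmono : ∀ S T : Finset V, S ⊆ T → f S ≤ f T)
    (hsub : ∀ S T : Finset V, f (S ∪ T) + f (S ∩ T) ≤ f S + f T)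
    {c : V → ℝ} (hc : ∀ v, 0 ≤ c v) (S T : Finset V) (u : V)
    (hratio : ∀ v ∈ T \ S, (f (insert v S) - f S) * c u ≤ (f (insert u S) - f S) * c v) :
    (f (S ∪ T) - f S) * c u ≤ (f (insert u S) - f S) * ∑ v ∈ T, c v := by
  have hgain : 0 ≤ f (insert u S) - f S := sub_nonneg.2 (hmono _ _ (subset_insert u S))
  calc (f (S ∪ T) - f S) * c u
      ≤ (∑ v ∈ T \ S, (f (insert v S) - f S)) * c u :=
        mul_le_mul_of_nonneg_right (sub_le_sum_marginal_of_submodular f hsub S T) (hc u)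
    _ = ∑ v ∈ T \ S, (f (insert v S) - f S) * c u := sum_mul _ _ _
    _ ≤ ∑ v ∈ T \ S, (f (insert u S) - f S) * c v := sum_le_sum hratio
    _ = (f (insert u S) - f S) * ∑ v ∈ T \ S, c v := (mul_sum _ _ _).symm
    _ ≤ (f (insert u S) - f S) * ∑ v ∈ T, c v :=
        mul_le_mul_of_nonneg_left
          (sum_le_sum_of_subset_of_nonneg sdiff_subset fun v _ _ => hc v) hgain

end SetFunction

lemma le_exp_neg_div_mul_of_mul_le {Δ Δ' w C : ℝ} (hC : 0 < C) (hΔ : 0 ≤ Δ)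
    (h : Δ * w ≤ (Δ - Δ') * C) : Δ' ≤ Real.exp (-w / C) * Δ :=
  calc Δ' ≤ (-w / C + 1) * Δ := by
        rw [add_mul, one_mul, neg_div, neg_mul, div_mul_eq_mul_div, mul_comm w]
        have : Δ * w / C ≤ Δ - Δ' := (div_le_iff₀ hC).2 h
        linarith
    _ ≤ Real.exp (-w / C) * Δ := mul_le_mul_of_nonneg_right (Real.add_one_le_exp _) hΔ

lemma le_exp_neg_sum_div_mul_of_step {Δ w : ℕ → ℝ} {C : ℝ} (hC : 0 < C) {p q : ℕ}
    (hpq : p ≤ q) (hΔp : 0 ≤ Δ p)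
    (hanti : ∀ i, p ≤ i → i < q → Δ (i + 1) ≤ Δ i)
    (hstep : ∀ i, p ≤ i → i < q → Δ i * w i ≤ (Δ i - Δ (i + 1)) * C) :
    Δ q ≤ Real.exp (-(∑ i ∈ Ico p q, w i) / C) * Δ p := by
  induction q, hpq using Nat.le_induction with
  | base => simp
  | succ i hpi ih =>
    have ih := ih (fun j hj hji => hanti j hj (by omega)) (fun j hj hji => hstep j hj (by omega))
    have hbound : 0 ≤ Real.exp (-(∑ j ∈ Ico p (i + 1), w j) / C) * Δ p := by positivity
    by_cases hΔi : Δ i ≤ 0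
    · linarith [hanti i hpi (by omega)]
    calc Δ (i + 1) ≤ Real.exp (-w i / C) * Δ i :=
          le_exp_neg_div_mul_of_mul_le hC (by linarith) (hstep i hpi (by omega))
      _ ≤ Real.exp (-w i / C) * (Real.exp (-(∑ j ∈ Ico p i, w j) / C) * Δ p) := by gcongr
      _ = Real.exp (-(∑ j ∈ Ico p (i + 1), w j) / C) * Δ p := by
          rw [sum_Ico_succ_top hpi, ← mul_assoc, ← Real.exp_add]
          ring_nf

lemma neg_div_le_div_of_lt {x r C D : ℝ} (hC : 0 < C) (hCD : C < D) (hx : 0 ≤ x)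
    (hxr : -x ≤ r) : -x / C ≤ r / D :=
  calc -x / C ≤ -x / D := by
        rw [neg_div, neg_div, neg_le_neg_iff]
        exact div_le_div_of_nonneg_left hx hC hCD.le
    _ ≤ r / D := by gcongr; exact (hC.trans hCD).le

lemma sum_image_range_eq_add_sum_Ico {V M : Type*} [DecidableEq V] [AddCommMonoid M]
    {u : ℕ → V} {p q : ℕ} (hinj : Set.InjOn u (range q)) (hpq : p ≤ q) (g : V → M) :
    ∑ v ∈ (range q).image u, g v = ∑ v ∈ (range p).image u, g v + ∑ i ∈ Ico p q, g (u i) := by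
  rw [sum_image hinj, sum_image (hinj.mono (by simpa using hpq)), sum_range_add_sum_Ico _ hpq]

theorem stmt5_general {V : Type*} [DecidableEq V]
    (f : Finset V → ℝ) (c : V → ℝ) (b : ℝ)
    (hmono : ∀ S T : Finset V, S ⊆ T → f S ≤ f T)
    (hsub : ∀ S T : Finset V, f (S ∪ T) + f (S ∩ T) ≤ f S + f T)
    (hcpos : ∀ v : V, 0 < c v)
    (q : ℕ) (u : ℕ → V)
    (hinj : ∀ i j : ℕ, i < q → j < q → u i = u j → i = j)
    (S : ℕ → Finset V) (hS : ∀ i : ℕ, S i = (Finset.range i).image u)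
    (p : ℕ) (hpq : p ≤ q)
    (OPT : Finset V) (o o' : V)
    (hrule : ∀ i : ℕ, p ≤ i → i < q →
      ∀ v ∈ (OPT \ (S p ∪ {o})) \ S i,
        (f (insert (u i) (S i)) - f (S i)) * c v ≥
        (f (insert v (S i)) - f (S i)) * c (u i))
    (hOPT' : (∑ v ∈ OPT \ (S p ∪ {o}), c v) + c o ≤ b)
    (hQo : (∑ v ∈ S p, c v) + c o > b)
    (hQ'o' : (∑ v ∈ S q, c v) + c o' > b) :
    f (S q) ≥ f (S p) +
      (1 - Real.exp (((∑ v ∈ S p, c v) + c o' - b) / (∑ v ∈ S p, c v))) *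
        (f (S p ∪ (OPT \ (S p ∪ {o}))) - f (S p)) := by
  set OPT' := OPT \ (S p ∪ {o})
  set A := S p ∪ OPT'
  have hS_mono : ∀ i j, i ≤ j → S i ⊆ S j := fun i j hij => by
    simpa only [hS] using image_subset_image (range_subset_range.2 hij)
  have hS_succ : ∀ i, S (i + 1) = insert (u i) (S i) := fun i => by
    rw [hS, hS, range_add_one, image_insert]
  have hcost : ∑ v ∈ S q, c v = ∑ v ∈ S p, c v + ∑ i ∈ Ico p q, c (u i) := by
    simp only [hS]
    exact sum_image_range_eq_add_sum_Ico
      (fun i hi j hj => hinj i j (mem_range.1 hi) (mem_range.1 hj)) hpq c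
  have hΔp : 0 ≤ f A - f (S p) := sub_nonneg.2 (hmono _ _ subset_union_left)
  rcases OPT'.eq_empty_or_nonempty with hempty | hne
  · simp only [A, hempty, union_empty, sub_self, mul_zero, add_zero]
    exact hmono _ _ (hS_mono p q hpq)
  have hC : 0 < ∑ v ∈ OPT', c v := sum_pos (fun v _ => hcpos v) hne
  have hdecay := le_exp_neg_sum_div_mul_of_step (Δ := fun i => f A - f (S i))
    (w := fun i => c (u i)) hC hpq hΔp
    (fun i _ _ => sub_le_sub_left (hmono _ _ (hS_mono i (i + 1) i.le_succ)) _)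
    (fun i hpi hiq => calc
      (f A - f (S i)) * c (u i) ≤ (f (S i ∪ OPT') - f (S i)) * c (u i) := by
          gcongr
          · exact (hcpos _).le
          · exact hmono _ _ (union_subset_union_left (hS_mono p i hpi))
      _ ≤ (f (S (i + 1)) - f (S i)) * ∑ v ∈ OPT', c v := by
          rw [hS_succ]
          exact sub_mul_le_marginal_mul_sum f hmono hsub (fun v => (hcpos v).le) _ _ _
            (hrule i hpi hiq)
      _ = _ := by ring)
  have hexponent : -(∑ i ∈ Ico p q, c (u i)) / ∑ v ∈ OPT', c v ≤
      (∑ v ∈ S p, c v + c o' - b) / ∑ v ∈ S p, c v :=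
    neg_div_le_div_of_lt hC (by linarith) (sum_nonneg fun i _ => (hcpos _).le) (by linarith)
  have hexp := mul_le_mul_of_nonneg_right (Real.exp_le_exp.2 hexponent) hΔp
  linarith

/-- Corollary 3.4: relation between Q' = S_q, Q = S_p and the optimal solution:
f(Q') ≥ f(Q) + (1 − exp((c(Q) + c(o') − b)/c(Q))) · (f(Q ∪ OPT') − f(Q)). -/
theorem stmt5 {V : Type*} [Fintype V] [DecidableEq V]
    (f : Finset V → ℝ) (c : V → ℝ) (b : ℝ)
    (hf0 : f ∅ = 0)
    (hmono : ∀ S T : Finset V, S ⊆ T → f S ≤ f T)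
    (hsub : ∀ S T : Finset V, f (S ∪ T) + f (S ∩ T) ≤ f S + f T)
    (hcpos : ∀ v : V, 0 < c v)
    (hb : 0 < b)
    (q : ℕ) (u : ℕ → V)
    (hinj : ∀ i j : ℕ, i < q → j < q → u i = u j → i = j)
    (S : ℕ → Finset V) (hS : ∀ i : ℕ, S i = (Finset.range i).image u)
    (p : ℕ) (hpq : p ≤ q)
    (OPT : Finset V) (o o' : V) (ho : o ∈ OPT) (ho' : o' ∈ OPT)
    (hrule : ∀ i : ℕ, p ≤ i → i < q →
      ∀ v ∈ (OPT \ (S p ∪ {o})) \ S i,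
        (f (insert (u i) (S i)) - f (S i)) * c v ≥
        (f (insert v (S i)) - f (S i)) * c (u i))
    (hOPT' : (∑ v ∈ OPT \ (S p ∪ {o}), c v) + c o ≤ b)
    (hQo : (∑ v ∈ S p, c v) + c o > b)
    (hQ'o' : (∑ v ∈ S q, c v) + c o' > b)
    (hQpos : 0 < ∑ v ∈ S p, c v) :
    f (S q) ≥ f (S p) +
      (1 - Real.exp (((∑ v ∈ S p, c v) + c o' - b) / (∑ v ∈ S p, c v))) *
        (f (S p ∪ (OPT \ (S p ∪ {o}))) - f (S p)) :=
  stmt5_general f c b hmono hsub hcpos q u hinj S hS p hpq OPT o o' hrule hOPT' hQo hQ'o'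
end

section
/- Let α, x1, x2, x3, x4, x5, x6 ∈ [0,1] be reals satisfying: α ≥ x1; (x4 > 0 → α ≥ x1 + (1 − exp((x4 + x6 − 1)/x4))·x3); α ≥ x2; (x5 > 0 → x1 ≥ (1 − 1/e)·(1 − 2α) + (x4 + x5 + x6 − 1)·x2/x5); x1 ≥ 1 − exp(−x4); x1 + x2 + x3 ≥ 1; (x5 > 0 → x1 + x2/x5 ≥ 1); and x4 + x5 ≥ 1. Then for every real α⊥ with 0.405 < α⊥ < 1 and (1 − α⊥)·ln(1 − α⊥) + (2 − 1/e)·(1 − 2·α⊥) = 0, it holds that α ≥ α⊥. -/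
/-!
Suppose `α < α⊥`. The function `thresholdFn` vanishing at `α⊥` is negative on `[1/2, 1)` and
strictly decreasing on `(-∞, 1/2]`, so `α⊥ < 1/2` and `thresholdFn α > 0`. Then `x4, x5 > 0`, and the
constraints involving `x5` give `x1 ≥ (1 - 1/e)(1 - 2α) + x6 (1 - x1)`. Together with
`x4 ≤ -ln (1 - x1)`, the monotonicity of `t ln t` on `[1/e, ∞)` and `thresholdFn α > 0`, this yields
`x4 (1 - α - x1) < (1 - x6)(1 - 2α)`, hence `exp ((x4 + x6 - 1)/x4) < (1 - 2α)/(1 - α - x1)` by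
`exp (1 - r) ≤ 1/r`. With `x3 ≥ 1 - α - x1` the constraint `h2` then forces `α > α`.
-/

open Real Set

noncomputable def thresholdFn (a : ℝ) : ℝ :=
  (1 - a) * log (1 - a) + (2 - 1 / exp 1) * (1 - 2 * a)

lemma one_div_exp_one_lt_half : 1 / exp 1 < 1 / 2 := by
  simpa [exp_neg] using exp_neg_one_lt_half

lemma thresholdFn_neg {a : ℝ} (ha : 1 / 2 ≤ a) (ha1 : a < 1) : thresholdFn a < 0 := by
  have hlog : (1 - a) * log (1 - a) < 0 := mul_log_neg (by linarith) (by linarith)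
  have hlin : (2 - 1 / exp 1) * (1 - 2 * a) ≤ 0 :=
    mul_nonpos_of_nonneg_of_nonpos (by linarith [one_div_exp_one_lt_half]) (by linarith)
  unfold thresholdFn
  linarith

lemma lt_half_of_thresholdFn_eq_zero {a : ℝ} (ha1 : a < 1) (h : thresholdFn a = 0) : a < 1 / 2 := by
  by_contra! ha
  linarith [thresholdFn_neg ha ha1]

lemma thresholdFn_strictAntiOn : StrictAntiOn thresholdFn (Iic (1 / 2)) := by
  intro a ha b hb hab
  have hmem {t : ℝ} (ht : t ∈ Iic (1 / 2 : ℝ)) : 1 - t ∈ Ici (exp (-1)) := by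
    rw [mem_Iic] at ht
    rw [mem_Ici]
    linarith [exp_neg_one_lt_half]
  have hlog : (1 - b) * log (1 - b) < (1 - a) * log (1 - a) :=
    mul_log_strictMonoOn (hmem hb) (hmem ha) (by linarith)
  have hlin : (2 - 1 / exp 1) * (1 - 2 * b) ≤ (2 - 1 / exp 1) * (1 - 2 * a) :=
    mul_le_mul_of_nonneg_left (by linarith) (by linarith [one_div_exp_one_lt_half])
  unfold thresholdFn
  linarith

lemma lt_one_of_one_sub_exp_neg_le {x y : ℝ} (hx : x < 1 / 2) (h : 1 - exp (-y) ≤ x) : y < 1 := by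
  by_contra! hy
  have : exp (-y) ≤ exp (-1) := exp_le_exp.2 (by linarith)
  linarith [exp_neg_one_lt_half]

lemma le_neg_log_one_sub_of_one_sub_exp_neg_le {x y : ℝ} (hx : x < 1) (h : 1 - exp (-y) ≤ x) :
    y ≤ -log (1 - x) := by
  have := log_le_log (by linarith) (show 1 - x ≤ exp (-y) by linarith)
  rw [log_exp] at this
  linarith

lemma exp_one_sub_le_inv {r : ℝ} (hr : 0 < r) : exp (1 - r) ≤ r⁻¹ := by
  rw [show 1 - r = -(r - 1) by ring, exp_neg]
  exact inv_anti₀ hr (by linarith [add_one_le_exp (r - 1)])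

lemma exp_sub_div_mul_lt {b c p q : ℝ} (hb : 0 < b) (hp : 0 < p) (hq : 0 < q)
    (h : b * p < c * q) : exp ((b - c) / b) * p < q := by
  have hlt : (b - c) / b < 1 - p / q := by
    rw [sub_div, div_self hb.ne', sub_lt_sub_iff_left, div_lt_div_iff₀ hq hb]
    linarith
  calc exp ((b - c) / b) * p < exp (1 - p / q) * p := by gcongr
    _ ≤ (p / q)⁻¹ * p := by gcongr; exact exp_one_sub_le_inv (by positivity)
    _ = q := by field_simp

lemma mul_one_sub_le_mul_div {x1 x2 x4 x5 x6 : ℝ} (hx1 : x1 ≤ 1) (hx6 : 0 ≤ x6)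
    (h7 : 1 ≤ x1 + x2 / x5) (h8 : 1 ≤ x4 + x5) :
    x6 * (1 - x1) ≤ (x4 + x5 + x6 - 1) * x2 / x5 := by
  rw [mul_div_assoc]
  exact mul_le_mul (by linarith) (by linarith) (by linarith) (by linarith)

lemma pos_of_one_le_add_div {α x1 x2 x4 x5 : ℝ} (hα : α < 1 / 2) (h1 : x1 ≤ α) (h3 : x2 ≤ α)
    (h7 : 0 < x5 → 1 ≤ x1 + x2 / x5) (h8 : 1 ≤ x4 + x5) : 0 < x4 := by
  by_contra! hx4
  have hx5 : 0 < x5 := by linarith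
  have : x2 / x5 < 1 / 2 := by rw [div_lt_iff₀ hx5]; linarith
  linarith [h7 hx5]

lemma mul_lt_of_thresholdFn_pos {α x1 x4 x6 : ℝ} (hα : α < 1 / 2) (h1 : x1 ≤ α)
    (hf : 0 < thresholdFn α) (hx4 : x4 ≤ -log (1 - x1))
    (hx1 : (1 - 1 / exp 1) * (1 - 2 * α) + x6 * (1 - x1) ≤ x1) :
    x4 * (1 - α - x1) < (1 - x6) * (1 - 2 * α) := by
  have hp : 0 < 1 - α - x1 := by linarith
  have hq : 0 < 1 - 2 * α := by linarith
  have hmono : (1 - α) * log (1 - α) ≤ (1 - x1) * log (1 - x1) :=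
    mul_log_strictMonoOn.monotoneOn (by rw [mem_Ici]; linarith [exp_neg_one_lt_half])
      (by rw [mem_Ici]; linarith [exp_neg_one_lt_half]) (by linarith)
  have hlin : (2 - 1 / exp 1) * (1 - α - x1) ≤ (1 - x6) * (1 - x1) := by
    have : 0 ≤ (α - x1) * (1 / exp 1) := mul_nonneg (by linarith) (by positivity)
    linarith
  unfold thresholdFn at hf
  refine lt_of_mul_lt_mul_left ?_ (show 0 ≤ 1 - x1 by linarith)
  calc (1 - x1) * (x4 * (1 - α - x1))
      = (1 - x1) * x4 * (1 - α - x1) := by ring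
    _ ≤ (1 - x1) * -log (1 - x1) * (1 - α - x1) := by gcongr; linarith
    _ = -((1 - x1) * log (1 - x1)) * (1 - α - x1) := by ring
    _ ≤ -((1 - α) * log (1 - α)) * (1 - α - x1) := by gcongr
    _ < (2 - 1 / exp 1) * (1 - 2 * α) * (1 - α - x1) := by gcongr; linarith
    _ ≤ (1 - x1) * ((1 - x6) * (1 - 2 * α)) := by
        linarith [mul_le_mul_of_nonneg_right hlin hq.le]

theorem stmt9_general (α x1 x2 x3 x4 x5 x6 : ℝ)
    (hx6 : x6 ∈ Set.Icc (0 : ℝ) 1)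
    (h1 : α ≥ x1)
    (h2 : 0 < x4 → α ≥ x1 + (1 - Real.exp ((x4 + x6 - 1) / x4)) * x3)
    (h3 : α ≥ x2)
    (h4 : 0 < x5 → x1 ≥ (1 - 1 / Real.exp 1) * (1 - 2 * α) +
      (x4 + x5 + x6 - 1) * x2 / x5)
    (h5 : x1 ≥ 1 - Real.exp (-x4))
    (h6 : x1 + x2 + x3 ≥ 1)
    (h7 : 0 < x5 → x1 + x2 / x5 ≥ 1)
    (h8 : x4 + x5 ≥ 1) :
    ∀ αb : ℝ, 0.405 < αb → αb < 1 →
      (1 - αb) * Real.log (1 - αb) + (2 - 1 / Real.exp 1) * (1 - 2 * αb) = 0 →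
      α ≥ αb := by
  intro αb _ hαb1 hroot
  by_contra! hlt
  have hαb : αb < 1 / 2 := lt_half_of_thresholdFn_eq_zero hαb1 hroot
  have hα : α < 1 / 2 := hlt.trans hαb
  have hf : 0 < thresholdFn α := by
    simpa [show thresholdFn αb = 0 from hroot] using thresholdFn_strictAntiOn hα.le hαb.le hlt
  have hx4 : 0 < x4 := pos_of_one_le_add_div hα h1 h3 h7 h8
  have hx5 : 0 < x5 := by linarith [lt_one_of_one_sub_exp_neg_le (h1.trans_lt hα) h5]
  have hx1_ge : (1 - 1 / exp 1) * (1 - 2 * α) + x6 * (1 - x1) ≤ x1 := by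
    linarith [h4 hx5, mul_one_sub_le_mul_div (by linarith) hx6.1 (h7 hx5) h8]
  have hE : exp ((x4 + x6 - 1) / x4) * (1 - α - x1) < 1 - 2 * α := by
    rw [show x4 + x6 - 1 = x4 - (1 - x6) by ring]
    refine exp_sub_div_mul_lt hx4 (by linarith) (by linarith) ?_
    exact mul_lt_of_thresholdFn_pos hα h1 hf
      (le_neg_log_one_sub_of_one_sub_exp_neg_le (by linarith) h5) hx1_ge
  have hx3 : 1 - α - x1 ≤ x3 := by linarith
  have hE1 : exp ((x4 + x6 - 1) / x4) ≤ 1 :=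
    le_of_mul_le_mul_right (by linarith : _ ≤ 1 * (1 - α - x1)) (by linarith)
  linarith [h2 hx4, mul_le_mul_of_nonneg_left hx3 (sub_nonneg.2 hE1)]

/-- Lemma 3.8: any feasible point of the constructed optimization problem satisfies
α ≥ α⊥, where α⊥ ∈ (0.405, 1) is the root of (1−α)ln(1−α) + (2 − 1/e)(1 − 2α) = 0. -/
theorem stmt9 (α x1 x2 x3 x4 x5 x6 : ℝ)
    (hα : α ∈ Set.Icc (0 : ℝ) 1)
    (hx1 : x1 ∈ Set.Icc (0 : ℝ) 1) (hx2 : x2 ∈ Set.Icc (0 : ℝ) 1)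
    (hx3 : x3 ∈ Set.Icc (0 : ℝ) 1) (hx4 : x4 ∈ Set.Icc (0 : ℝ) 1)
    (hx5 : x5 ∈ Set.Icc (0 : ℝ) 1) (hx6 : x6 ∈ Set.Icc (0 : ℝ) 1)
    (h1 : α ≥ x1)
    (h2 : 0 < x4 → α ≥ x1 + (1 - Real.exp ((x4 + x6 - 1) / x4)) * x3)
    (h3 : α ≥ x2)
    (h4 : 0 < x5 → x1 ≥ (1 - 1 / Real.exp 1) * (1 - 2 * α) +
      (x4 + x5 + x6 - 1) * x2 / x5)
    (h5 : x1 ≥ 1 - Real.exp (-x4))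
    (h6 : x1 + x2 + x3 ≥ 1)
    (h7 : 0 < x5 → x1 + x2 / x5 ≥ 1)
    (h8 : x4 + x5 ≥ 1) :
    ∀ αb : ℝ, 0.405 < αb → αb < 1 →
      (1 - αb) * Real.log (1 - αb) + (2 - 1 / Real.exp 1) * (1 - 2 * αb) = 0 →
      α ≥ αb :=
  stmt9_general α x1 x2 x3 x4 x5 x6 hx6 h1 h2 h3 h4 h5 h6 h7 h8
end

section
/- For every finset S ⊆ V and every finset T ⊆ V with c(T) ≤ b, it holds that f(T) ≤ f(S ∪ T) ≤ f(S) + Δ(b∣S). -/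
open Finset

/-!
Adding the elements of `T` to `S` one at a time, submodularity bounds each step by the marginal
gain on top of `S` itself, so `f (S ∪ T) ≤ f S + ∑ v ∈ T \ S, f(v∣S)`. That sum is the value of the
fractional knapsack at the indicator of `T`, which is feasible since `c(T) ≤ b`.
-/

section Submodular

variable {V : Type*} [DecidableEq V] (f : Finset V → ℝ)

theorem le_add_sum_marginal_of_submodular
    (hsub : ∀ S T : Finset V, f (S ∪ T) + f (S ∩ T) ≤ f S + f T) (S A : Finset V) :
    f (S ∪ A) ≤ f S + ∑ v ∈ A, (f (insert v S) - f S) := by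
  induction A using Finset.induction_on with
  | empty => simp
  | @insert a A haA ih =>
    have hunion : S ∪ A ∪ insert a S = S ∪ insert a A := by
      ext; simp only [mem_union, mem_insert]; tauto
    have hinter : (S ∪ A) ∩ insert a S = S := by
      ext; simp only [mem_inter, mem_union, mem_insert]; grind
    have hstep := hsub (S ∪ A) (insert a S)
    rw [hunion, hinter] at hstep
    rw [sum_insert haA]
    linarith

end Submodular

section Knapsack

variable {V : Type*} [Fintype V] (c g : V → ℝ) (b : ℝ) (s : Finset V)

def knapsackValues : Set ℝ :=
  {y | ∃ x : V → ℝ, (∀ v, 0 ≤ x v ∧ x v ≤ 1) ∧ ∑ v, c v * x v ≤ b ∧ y = ∑ v ∈ s, g v * x v}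

theorem bddAbove_knapsackValues : BddAbove (knapsackValues c g b s) := by
  refine ⟨∑ v ∈ s, |g v|, ?_⟩
  rintro _ ⟨x, hx, -, rfl⟩
  refine sum_le_sum fun v _ => ?_
  calc g v * x v ≤ |g v| * x v := mul_le_mul_of_nonneg_right (le_abs_self _) (hx v).1
    _ ≤ |g v| * 1 := mul_le_mul_of_nonneg_left (hx v).2 (abs_nonneg _)
    _ = |g v| := mul_one _

theorem sum_inter_le_sSup_knapsackValues [DecidableEq V] {T : Finset V} (hT : ∑ v ∈ T, c v ≤ b) :
    ∑ v ∈ s ∩ T, g v ≤ sSup (knapsackValues c g b s) := by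
  let x : V → ℝ := fun v => if v ∈ T then 1 else 0
  refine le_csSup (bddAbove_knapsackValues c g b s) ⟨x, fun v => ?_, ?_, ?_⟩
  · by_cases hv : v ∈ T <;> simp [x, hv]
  · simpa [x, mul_ite, sum_ite_mem] using hT
  · simp [x, mul_ite, sum_ite_mem]

end Knapsack

theorem stmt10_general {V : Type*} [Fintype V] [DecidableEq V]
    (f : Finset V → ℝ) (c : V → ℝ) (b : ℝ)
    (hmono : ∀ S T : Finset V, S ⊆ T → f S ≤ f T)
    (hsub : ∀ S T : Finset V, f (S ∪ T) + f (S ∩ T) ≤ f S + f T)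
    (S T : Finset V) (hT : ∑ v ∈ T, c v ≤ b) :
    f T ≤ f (S ∪ T) ∧
    f (S ∪ T) ≤ f S + sSup {y : ℝ | ∃ x : V → ℝ,
      (∀ v : V, 0 ≤ x v ∧ x v ≤ 1) ∧
      (∑ v : V, c v * x v ≤ b) ∧
      y = ∑ v ∈ Finset.univ \ S, (f (insert v S) - f S) * x v} := by
  refine ⟨hmono _ _ subset_union_right, ?_⟩
  have hgain_in_S : ∀ v ∈ T, v ∉ (univ \ S) ∩ T → f (insert v S) - f S = 0 := by
    intro v hvT hv
    have hvS : v ∈ S := by simpa [hvT] using hv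
    rw [insert_eq_of_mem hvS, sub_self]
  calc f (S ∪ T) ≤ f S + ∑ v ∈ T, (f (insert v S) - f S) :=
        le_add_sum_marginal_of_submodular f hsub S T
    _ = f S + ∑ v ∈ (univ \ S) ∩ T, (f (insert v S) - f S) := by
        rw [sum_subset inter_subset_right hgain_in_S]
    _ ≤ _ := add_le_add_right (sum_inter_le_sSup_knapsackValues c _ b _ hT) _

/-- Inequality (14): for every S and every feasible T (c(T) ≤ b),
f(T) ≤ f(S ∪ T) ≤ f(S) + Δ(b∣S), where Δ(b∣S) is the fractional-knapsack
upper bound on the largest marginal gain on top of S under budget b. -/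
theorem stmt10 {V : Type*} [Fintype V] [DecidableEq V]
    (f : Finset V → ℝ) (c : V → ℝ) (b : ℝ)
    (hf0 : f ∅ = 0)
    (hmono : ∀ S T : Finset V, S ⊆ T → f S ≤ f T)
    (hsub : ∀ S T : Finset V, f (S ∪ T) + f (S ∩ T) ≤ f S + f T)
    (hcpos : ∀ v : V, 0 < c v)
    (hb : 0 < b)
    (S T : Finset V) (hT : ∑ v ∈ T, c v ≤ b) :
    f T ≤ f (S ∪ T) ∧
    f (S ∪ T) ≤ f S + sSup {y : ℝ | ∃ x : V → ℝ,
      (∀ v : V, 0 ≤ x v ∧ x v ≤ 1) ∧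
      (∑ v : V, c v * x v ≤ b) ∧
      y = ∑ v ∈ Finset.univ \ S, (f (insert v S) - f S) * x v} :=
  stmt10_general f c b hmono hsub S T hT
end

section
/- For every run of the greedy heuristic and every finset T ⊆ V, it holds that f(S_g) ≥ (1 − c(T)/b) · f(T). -/
/-!
Let `j₀` be the first step at which the run meets an element of `T` that does not end up in
`S_g`, and let `R = A j₀` be the set accepted before it. Along the run up to `j₀`, the greedy
rule and diminishing marginals give `f(v ∣ R) · c(R) ≤ f(R) · c(v)` for every `v ∈ T \ S_g`,
and `c(R) > b - c(T)` because `u j₀` was rejected. Summing over `T \ S_g` and using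
`f(T) ≤ f(S_g) + ∑_{v ∈ T \ S_g} f(v ∣ S_g)` yields `(f(T) - f(S_g)) · (b - c(T)) ≤ f(S_g) · c(T)`.
-/

open Finset

theorem Fin.le_of_forall_succ_sub_le {α : Type*} [AddCommGroup α] [PartialOrder α]
    [IsOrderedAddMonoid α] {n : ℕ} {φ ψ : Fin (n + 1) → α} {k : Fin (n + 1)}
    (h0 : φ 0 ≤ ψ 0)
    (hstep : ∀ i : Fin n, i.succ ≤ k → φ i.succ - φ i.castSucc ≤ ψ i.succ - ψ i.castSucc) :
    φ k ≤ ψ k := by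
  induction k using Fin.induction with
  | zero => exact h0
  | succ i ih =>
    have hle : φ i.castSucc ≤ ψ i.castSucc :=
      ih fun j hj => hstep j (hj.trans i.castSucc_lt_succ.le)
    calc φ i.succ = (φ i.succ - φ i.castSucc) + φ i.castSucc := (sub_add_cancel _ _).symm
      _ ≤ (ψ i.succ - ψ i.castSucc) + ψ i.castSucc := add_le_add (hstep i le_rfl) hle
      _ = ψ i.succ := sub_add_cancel _ _

section SetFunction

variable {V : Type*} [DecidableEq V]

def marginal (f : Finset V → ℝ) (v : V) (S : Finset V) : ℝ := f (insert v S) - f S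

def IsSubmodular (f : Finset V → ℝ) : Prop :=
  ∀ S T : Finset V, f (S ∪ T) + f (S ∩ T) ≤ f S + f T

variable {f : Finset V → ℝ}

theorem marginal_nonneg (hf : Monotone f) (v : V) (S : Finset V) : 0 ≤ marginal f v S :=
  sub_nonneg.2 (hf (subset_insert v S))

theorem IsSubmodular.marginal_le_marginal (hf : IsSubmodular f) {v : V} {S T : Finset V}
    (hST : S ⊆ T) (hv : v ∉ T) : marginal f v T ≤ marginal f v S := by
  have h := hf (insert v S) T
  rw [insert_union, union_eq_right.2 hST, insert_inter_of_notMem hv,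
    inter_eq_left.2 hST] at h
  unfold marginal
  linarith

theorem IsSubmodular.le_add_sum_marginal (hf : IsSubmodular f) (S : Finset V) {D : Finset V}
    (hD : Disjoint S D) : f (S ∪ D) ≤ f S + ∑ v ∈ D, marginal f v S := by
  induction D using Finset.induction_on with
  | empty => simp
  | insert a D ha ih =>
    rw [disjoint_insert_right] at hD
    have hmarg : marginal f a (S ∪ D) ≤ marginal f a S :=
      hf.marginal_le_marginal subset_union_left (by simp [hD.1, ha])
    rw [union_insert, sum_insert ha]
    linarith [ih hD.2, sub_le_iff_le_add'.1 hmarg]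

end SetFunction

section GreedyRun

variable {V : Type*} [DecidableEq V] {c : V → ℝ} {b : ℝ}

def IsGreedyStep (c : V → ℝ) (b : ℝ) (v : V) (S S' : Finset V) : Prop :=
  ((∑ w ∈ S, c w) + c v ≤ b → S' = insert v S) ∧ (¬ ((∑ w ∈ S, c w) + c v ≤ b) → S' = S)

namespace IsGreedyStep

variable {v : V} {S S' : Finset V}

theorem eq_or_eq_insert (h : IsGreedyStep c b v S S') : S' = S ∨ v ∉ S ∧ S' = insert v S := by
  by_cases hfit : (∑ w ∈ S, c w) + c v ≤ b
  · by_cases hv : v ∈ S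
    · exact .inl (by rw [h.1 hfit, insert_eq_of_mem hv])
    · exact .inr ⟨hv, h.1 hfit⟩
  · exact .inl (h.2 hfit)

theorem subset (h : IsGreedyStep c b v S S') : S ⊆ S' := by
  rcases h.eq_or_eq_insert with rfl | ⟨-, rfl⟩
  exacts [subset_rfl, subset_insert v S]

theorem lt_cost_of_notMem (h : IsGreedyStep c b v S S') (hv : v ∉ S') :
    b < (∑ w ∈ S, c w) + c v := by
  by_contra! hfit
  exact hv (h.1 hfit ▸ mem_insert_self v S)

end IsGreedyStep

variable {n : ℕ} {u : Fin n → V} {A : Fin (n + 1) → Finset V}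

theorem monotone_of_isGreedyStep
    (hstep : ∀ i, IsGreedyStep c b (u i) (A i.castSucc) (A i.succ)) : Monotone A :=
  Fin.monotone_iff_le_succ.2 fun i => (hstep i).subset

variable {f : Finset V → ℝ}

theorem marginal_mul_cost_le_of_isGreedyStep (hf0 : f ∅ = 0) (hf : IsSubmodular f)
    (hc : ∀ v, 0 ≤ c v) (hA0 : A 0 = ∅)
    (hstep : ∀ i, IsGreedyStep c b (u i) (A i.castSucc) (A i.succ))
    (hgreedy : ∀ i j : Fin n, i ≤ j →
      marginal f (u j) (A i.castSucc) * c (u i) ≤ marginal f (u i) (A i.castSucc) * c (u j))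
    {j k : Fin n} (hjk : j ≤ k) (hk : u k ∉ A j.castSucc) :
    marginal f (u k) (A j.castSucc) * ∑ w ∈ A j.castSucc, c w ≤
      f (A j.castSucc) * c (u k) := by
  set g := marginal f (u k) (A j.castSucc)
  refine Fin.le_of_forall_succ_sub_le (φ := fun i => g * ∑ w ∈ A i, c w)
    (ψ := fun i => f (A i) * c (u k)) (by simp [hA0, hf0]) fun i hi => ?_
  have hij : i < j := Fin.succ_le_castSucc_iff.1 hi
  rcases (hstep i).eq_or_eq_insert with hrej | ⟨hi_notMem, hacc⟩
  · simp [hrej]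
  · have hAij : A i.castSucc ⊆ A j.castSucc :=
      monotone_of_isGreedyStep hstep (Fin.castSucc_le_castSucc_iff.2 hij.le)
    have hg : g ≤ marginal f (u k) (A i.castSucc) := hf.marginal_le_marginal hAij hk
    have hratio := hgreedy i k (hij.le.trans hjk)
    simp only [hacc, sum_insert hi_notMem]
    calc g * (c (u i) + ∑ w ∈ A i.castSucc, c w) - g * ∑ w ∈ A i.castSucc, c w
        = g * c (u i) := by ring
      _ ≤ marginal f (u k) (A i.castSucc) * c (u i) := mul_le_mul_of_nonneg_right hg (hc _)
      _ ≤ marginal f (u i) (A i.castSucc) * c (u k) := hratio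
      _ = _ := by unfold marginal; ring

theorem sum_marginal_mul_le_of_isGreedyStep (hf0 : f ∅ = 0) (hmono : Monotone f)
    (hf : IsSubmodular f) (hc : ∀ v, 0 ≤ c v) (hu : Function.Surjective u) (hA0 : A 0 = ∅)
    (hstep : ∀ i, IsGreedyStep c b (u i) (A i.castSucc) (A i.succ))
    (hgreedy : ∀ i j : Fin n, i ≤ j →
      marginal f (u j) (A i.castSucc) * c (u i) ≤ marginal f (u i) (A i.castSucc) * c (u j))
    (T : Finset V) :
    (∑ v ∈ T \ A (Fin.last n), marginal f v (A (Fin.last n))) * (b - ∑ w ∈ T, c w) ≤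
      f (A (Fin.last n)) * ∑ w ∈ T, c w := by
  set S := A (Fin.last n)
  have hfS : 0 ≤ f S := hf0 ▸ hmono (empty_subset S)
  rcases (T \ S).eq_empty_or_nonempty with hD | hD
  · rw [hD, sum_empty, zero_mul]
    exact mul_nonneg hfS (sum_nonneg fun v _ => hc v)
  set J := univ.filter fun j => u j ∈ T \ S
  have hJ : J.Nonempty := by
    obtain ⟨v, hv⟩ := hD
    obtain ⟨j, rfl⟩ := hu v
    exact ⟨j, by simpa [J] using hv⟩
  set j₀ := J.min' hJ
  set R := A j₀.castSucc
  have hRS : R ⊆ S := monotone_of_isGreedyStep hstep (Fin.le_last _)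
  have hj₀ : u j₀ ∈ T \ S := (mem_filter.1 (J.min'_mem hJ)).2
  have hcostR : b - ∑ w ∈ T, c w < ∑ w ∈ R, c w := by
    have hrej := (hstep j₀).lt_cost_of_notMem fun h =>
      (mem_sdiff.1 hj₀).2 (monotone_of_isGreedyStep hstep (Fin.le_last _) h)
    linarith [single_le_sum (fun v _ => hc v) (mem_sdiff.1 hj₀).1]
  have hbound : ∀ v ∈ T \ S, marginal f v S * (b - ∑ w ∈ T, c w) ≤ f S * c v := by
    intro v hv
    obtain ⟨k, rfl⟩ := hu v
    have hkS : u k ∉ S := (mem_sdiff.1 hv).2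
    have hk : j₀ ≤ k := J.min'_le k (by simpa [J] using hv)
    calc marginal f (u k) S * (b - ∑ w ∈ T, c w)
        ≤ marginal f (u k) S * ∑ w ∈ R, c w :=
          mul_le_mul_of_nonneg_left hcostR.le (marginal_nonneg hmono _ _)
      _ ≤ marginal f (u k) R * ∑ w ∈ R, c w :=
          mul_le_mul_of_nonneg_right (hf.marginal_le_marginal hRS hkS)
            (sum_nonneg fun v _ => hc v)
      _ ≤ f R * c (u k) := marginal_mul_cost_le_of_isGreedyStep hf0 hf hc hA0 hstep hgreedy hk
          fun h => hkS (hRS h)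
      _ ≤ f S * c (u k) := mul_le_mul_of_nonneg_right (hmono hRS) (hc _)
  calc (∑ v ∈ T \ S, marginal f v S) * (b - ∑ w ∈ T, c w)
      = ∑ v ∈ T \ S, marginal f v S * (b - ∑ w ∈ T, c w) := sum_mul _ _ _
    _ ≤ ∑ v ∈ T \ S, f S * c v := sum_le_sum hbound
    _ = f S * ∑ v ∈ T \ S, c v := (mul_sum _ _ _).symm
    _ ≤ f S * ∑ w ∈ T, c w := mul_le_mul_of_nonneg_left
        (sum_le_sum_of_subset_of_nonneg sdiff_subset fun v _ _ => hc v) hfS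

end GreedyRun

theorem stmt14_general {V : Type*} [Fintype V] [DecidableEq V]
    (f : Finset V → ℝ) (c : V → ℝ) (b : ℝ)
    (hf0 : f ∅ = 0)
    (hmono : ∀ S T : Finset V, S ⊆ T → f S ≤ f T)
    (hsub : ∀ S T : Finset V, f (S ∪ T) + f (S ∩ T) ≤ f S + f T)
    (hcpos : ∀ v : V, 0 < c v)
    (hb : 0 < b)
    (u : Fin (Fintype.card V) → V) (hu : Function.Bijective u)
    (A : Fin (Fintype.card V + 1) → Finset V)
    (hA0 : A 0 = ∅)
    (hstep : ∀ i : Fin (Fintype.card V),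
      ((∑ v ∈ A i.castSucc, c v) + c (u i) ≤ b →
        A i.succ = insert (u i) (A i.castSucc)) ∧
      (¬ ((∑ v ∈ A i.castSucc, c v) + c (u i) ≤ b) →
        A i.succ = A i.castSucc))
    (hgreedy : ∀ i j : Fin (Fintype.card V), i ≤ j →
      (f (insert (u i) (A i.castSucc)) - f (A i.castSucc)) * c (u j) ≥
      (f (insert (u j) (A i.castSucc)) - f (A i.castSucc)) * c (u i))
    (T : Finset V) :
    f (A (Fin.last (Fintype.card V))) ≥ (1 - (∑ v ∈ T, c v) / b) * f T := by
  have hf : IsSubmodular f := hsub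
  have hratio := sum_marginal_mul_le_of_isGreedyStep hf0 (fun _ _ h => hmono _ _ h) hf
    (fun v => (hcpos v).le) hu.2 hA0 hstep hgreedy T
  set S := A (Fin.last (Fintype.card V))
  set C := ∑ v ∈ T, c v
  have hfS : 0 ≤ f S := hf0 ▸ hmono _ _ (empty_subset S)
  have hfT : 0 ≤ f T := hf0 ▸ hmono _ _ (empty_subset T)
  have hcover : f T ≤ f S + ∑ v ∈ T \ S, marginal f v S := by
    refine (hmono _ _ ?_).trans (hf.le_add_sum_marginal S disjoint_sdiff)
    rw [union_sdiff_self_eq_union]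
    exact subset_union_right
  have hkey : (b - C) * f T ≤ b * f S := by
    rcases le_total C b with hCb | hbC
    · nlinarith [mul_le_mul_of_nonneg_left hcover (sub_nonneg.2 hCb)]
    · nlinarith
  rw [ge_iff_le, one_sub_div hb.ne', div_mul_eq_mul_div, div_le_iff₀ hb]
  linarith

/-- Lemma 5.2: for every run of the greedy heuristic and every finset T,
f(S_g) ≥ (1 − c(T)/b) · f(T). -/
theorem stmt14 {V : Type*} [Fintype V] [DecidableEq V]
    (f : Finset V → ℝ) (c : V → ℝ) (b : ℝ)
    (hf0 : f ∅ = 0)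
    (hmono : ∀ S T : Finset V, S ⊆ T → f S ≤ f T)
    (hsub : ∀ S T : Finset V, f (S ∪ T) + f (S ∩ T) ≤ f S + f T)
    (hcpos : ∀ v : V, 0 < c v)
    (hb : 0 < b)
    (hcb : ∀ v : V, c v ≤ b)
    (u : Fin (Fintype.card V) → V) (hu : Function.Bijective u)
    (A : Fin (Fintype.card V + 1) → Finset V)
    (hA0 : A 0 = ∅)
    (hstep : ∀ i : Fin (Fintype.card V),
      ((∑ v ∈ A i.castSucc, c v) + c (u i) ≤ b →
        A i.succ = insert (u i) (A i.castSucc)) ∧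
      (¬ ((∑ v ∈ A i.castSucc, c v) + c (u i) ≤ b) →
        A i.succ = A i.castSucc))
    (hgreedy : ∀ i j : Fin (Fintype.card V), i ≤ j →
      (f (insert (u i) (A i.castSucc)) - f (A i.castSucc)) * c (u j) ≥
      (f (insert (u j) (A i.castSucc)) - f (A i.castSucc)) * c (u i))
    (T : Finset V) :
    f (A (Fin.last (Fintype.card V))) ≥ (1 - (∑ v ∈ T, c v) / b) * f T :=
  stmt14_general f c b hf0 hmono hsub hcpos hb u hu A hA0 hstep hgreedy T
end

section
/- Let α, x1, x2, x3 ∈ [0,1] be reals satisfying: α ≥ x1; α ≥ 1 − x1 − x2; (1 − x3)·α ≥ (1 − x3)·x1 + (1 − 2·x3)·x2; and x1 ≥ 1 − exp(−x3). Then α ≥ 1 − 1/√e, i.e., α ≥ 1 − exp(−1/2). -/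
/-!
Put `c = 1 - exp (-1/2)`. If `x3 ≥ 1/2` then `α ≥ x1 ≥ 1 - exp (-x3) ≥ c`. Otherwise
`1 - 2 x3 ≥ 0`, so the second constraint can be substituted for `x2` in the third, giving
`(2 - 3 x3) α ≥ x3 x1 + 1 - 2 x3`. On `[0, 1/2]` the convex function `exp (-t)` lies below its
chord, so `x1 ≥ 2 c x3`, and the remaining inequality
`2 c x3² + 1 - 2 x3 ≥ (2 - 3 x3) c` factors as `(1 - 2 x3) (1 - 2 c - c x3) ≥ 0`,
which holds because `c < 2/5`.
-/

open Real

lemma three_fifths_lt_exp_neg_half : (3 / 5 : ℝ) < exp (-(1 / 2)) := by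
  rw [exp_neg, lt_inv_comm₀ (by norm_num) (exp_pos _)]
  have hsq : exp (1 / 2) ^ 2 = exp 1 := by
    rw [← exp_nat_mul]; norm_num
  nlinarith [exp_one_lt_d9, exp_pos (1 / 2)]

lemma exp_neg_le_chord {a t : ℝ} (ht : 0 ≤ t) (hta : t ≤ a) :
    a * exp (-t) ≤ a - (1 - exp (-a)) * t := by
  rcases hta.lt_or_eq with hta | rfl
  · have ha : 0 < a := ht.trans_lt hta
    have hconv := convexOn_exp.2 (Set.mem_univ 0) (Set.mem_univ (-a))
      (div_nonneg (sub_nonneg.2 hta.le) ha.le) (div_nonneg ht ha.le)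
      (by field_simp; ring)
    have hpt : t / a * -a = -t := by field_simp
    simp only [smul_eq_mul, mul_zero, zero_add, exp_zero, mul_one, hpt] at hconv
    calc a * exp (-t) ≤ a * ((a - t) / a + t / a * exp (-a)) := by gcongr
      _ = a - (1 - exp (-a)) * t := by field_simp; ring
  · exact le_of_eq (by ring)

lemma one_sub_exp_neg_half_le_of_lt_half {α x1 x2 x3 : ℝ} (hx3 : 0 ≤ x3) (hx3_half : x3 < 1 / 2)
    (h2 : α ≥ 1 - x1 - x2)
    (h3 : (1 - x3) * α ≥ (1 - x3) * x1 + (1 - 2 * x3) * x2)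
    (h4 : x1 ≥ 1 - exp (-x3)) :
    α ≥ 1 - exp (-(1 / 2)) := by
  set c := 1 - exp (-(1 / 2))
  have hc_lt : c < 2 / 5 := by linarith [three_fifths_lt_exp_neg_half]
  have hsub : (2 - 3 * x3) * α ≥ x3 * x1 + 1 - 2 * x3 := by
    nlinarith [mul_le_mul_of_nonneg_left (show 1 - x1 - α ≤ x2 by linarith)
      (show 0 ≤ 1 - 2 * x3 by linarith)]
  have hx1 : x1 ≥ 2 * c * x3 := by
    have := exp_neg_le_chord hx3 hx3_half.le
    linarith
  have hfactor : 2 * c * x3 ^ 2 + 1 - 2 * x3 - (2 - 3 * x3) * c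
      = (1 - 2 * x3) * (1 - 2 * c - c * x3) := by ring
  have hquad : (2 - 3 * x3) * c ≤ 2 * c * x3 ^ 2 + 1 - 2 * x3 := by
    have : 0 ≤ (1 - 2 * x3) * (1 - 2 * c - c * x3) :=
      mul_nonneg (by linarith) (by nlinarith)
    linarith
  have hα : (2 - 3 * x3) * c ≤ (2 - 3 * x3) * α := by
    nlinarith [mul_le_mul_of_nonneg_left hx1 hx3]
  exact le_of_mul_le_mul_left hα (by linarith)

theorem stmt17_general (α x1 x2 x3 : ℝ)
    (hx3 : x3 ∈ Set.Icc (0 : ℝ) 1)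
    (h1 : α ≥ x1)
    (h2 : α ≥ 1 - x1 - x2)
    (h3 : (1 - x3) * α ≥ (1 - x3) * x1 + (1 - 2 * x3) * x2)
    (h4 : x1 ≥ 1 - Real.exp (-x3)) :
    α ≥ 1 - Real.exp (-(1 / 2)) := by
  rcases le_or_gt (1 / 2) x3 with hx3_half | hx3_half
  · calc 1 - exp (-(1 / 2)) ≤ 1 - exp (-x3) := by gcongr
      _ ≤ x1 := h4
      _ ≤ α := h1
  · exact one_sub_exp_neg_half_le_of_lt_half hx3.1 hx3_half h2 h3 h4

/-- Lemma 5.5: any feasible point of the simplified optimization problem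
satisfies α ≥ 1 − 1/√e = 1 − exp(−1/2). -/
theorem stmt17 (α x1 x2 x3 : ℝ)
    (hα : α ∈ Set.Icc (0 : ℝ) 1)
    (hx1 : x1 ∈ Set.Icc (0 : ℝ) 1) (hx2 : x2 ∈ Set.Icc (0 : ℝ) 1)
    (hx3 : x3 ∈ Set.Icc (0 : ℝ) 1)
    (h1 : α ≥ x1)
    (h2 : α ≥ 1 - x1 - x2)
    (h3 : (1 - x3) * α ≥ (1 - x3) * x1 + (1 - 2 * x3) * x2)
    (h4 : x1 ≥ 1 - Real.exp (-x3)) :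
    α ≥ 1 - Real.exp (-(1 / 2)) :=
  stmt17_general α x1 x2 x3 hx3 h1 h2 h3 h4
end
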